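/- Let (R, m, k) be a complete Noetherian local ring and A an Artinian R-module. Then the Matlis dual D(A) = Hom_R(A, E_R(k)) is a finitely generated R-module, and Att_R A = Ass_R D(A). -/

import Mathlib

/-- A module `M` over `R` is *secondary* if it is nonzero and every `x : R` acts on `M`
either surjectively or nilpotently. -/
def IsSecondary (R : Type*) [CommRing R] (M : Type*) [AddCommGroup M] [Module R M] : Prop :=
  Nontrivial M ∧
    ∀ x : R, Function.Surjective (fun m : M => x • m) ∨ ∃ n : ℕ, ∀ m : M, x ^ n • m = 0

/-- A minimal secondary representation of the module `M`:
a finite family of secondary submodules summing to `M`, irredundant,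
with pairwise distinct attached primes. -/
structure MinimalSecondaryRep (R : Type*) [CommRing R] (M : Type*) [AddCommGroup M]
    [Module R M] where
  n : ℕ
  comp : Fin n → Submodule R M
  p : Fin n → Ideal R
  sum_eq : (⨆ i, comp i) = ⊤
  secondary : ∀ i, IsSecondary R (comp i)
  rad_eq : ∀ i, (Module.annihilator R (comp i)).radical = p i
  isPrime : ∀ i, (p i).IsPrime
  irredundant : ∀ i, (⨆ j ∈ ({i}ᶜ : Set (Fin n)), comp j) ≠ ⊤
  inj : Function.Injective p

/-- The set of attached primes of `M`: the primes occurring in a minimal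
secondary representation of `M` (this set does not depend on the representation). -/
def attachedPrimes (R : Type*) [CommRing R] (M : Type*) [AddCommGroup M] [Module R M] :
    Set (Ideal R) :=
  { q | ∃ rep : MinimalSecondaryRep R M, ∃ i, rep.p i = q }



set_option linter.unusedSectionVars false

section Secondary

variable {R : Type} [CommRing R] {A : Type} [AddCommGroup A] [Module R A]

/-- `x` acts surjectively on the submodule `N`. -/
def SurjOn (x : R) (N : Submodule R A) : Prop := ∀ a ∈ N, ∃ b ∈ N, x • b = a

/-- `x` acts nilpotently on the submodule `N`. -/
def NilpOn (x : R) (N : Submodule R A) : Prop := ∃ n : ℕ, ∀ a ∈ N, x ^ n • a = 0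

theorem nilpOn_iff_mem_radical {x : R} {N : Submodule R A} :
    NilpOn x N ↔ x ∈ (Module.annihilator R N).radical := by
  constructor
  · rintro ⟨n, hn⟩
    exact ⟨n, Module.mem_annihilator.2 fun m => Subtype.ext (hn m m.2)⟩
  · rintro ⟨n, hn⟩
    exact ⟨n, fun a ha => congrArg Subtype.val (Module.mem_annihilator.1 hn ⟨a, ha⟩)⟩

theorem isSecondary_iff {N : Submodule R A} :
    IsSecondary R N ↔ N ≠ ⊥ ∧ ∀ x : R, SurjOn x N ∨ NilpOn x N := by
  constructor
  · rintro ⟨h1, h2⟩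
    refine ⟨Submodule.nontrivial_iff_ne_bot.1 h1, fun x => (h2 x).imp ?_ ?_⟩
    · intro hs a ha
      obtain ⟨b, hb⟩ := hs ⟨a, ha⟩
      exact ⟨b, b.2, congrArg Subtype.val hb⟩
    · rintro ⟨n, hn⟩
      exact ⟨n, fun a ha => congrArg Subtype.val (hn ⟨a, ha⟩)⟩
  · rintro ⟨h1, h2⟩
    refine ⟨Submodule.nontrivial_iff_ne_bot.2 h1, fun x => (h2 x).imp ?_ ?_⟩
    · intro hs a
      obtain ⟨b, hb, hba⟩ := hs a a.2
      exact ⟨⟨b, hb⟩, Subtype.ext hba⟩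
    · rintro ⟨n, hn⟩
      exact ⟨n, fun m => Subtype.ext (hn m m.2)⟩

theorem IsSecondary.surjOn_of_not_nilpOn {N : Submodule R A} (h : IsSecondary R N)
    {x : R} (hx : ¬ NilpOn x N) : SurjOn x N :=
  ((isSecondary_iff.1 h).2 x).resolve_right hx

theorem IsSecondary.radical_isPrime {N : Submodule R A} (h : IsSecondary R N) :
    (Module.annihilator R N).radical.IsPrime := by
  have hbot := (isSecondary_iff.1 h).1
  constructor
  · intro htop
    have h1 : (1 : R) ∈ (Module.annihilator R N).radical := htop ▸ trivial
    obtain ⟨n, hn⟩ := nilpOn_iff_mem_radical.2 h1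
    refine hbot (Submodule.eq_bot_iff _ |>.2 fun a ha => ?_)
    simpa using hn a ha
  · intro x y hxy
    by_contra hcon
    push_neg at hcon
    obtain ⟨hx, hy⟩ := hcon
    have hsx := h.surjOn_of_not_nilpOn (fun hh => hx (nilpOn_iff_mem_radical.1 hh))
    have hsy := h.surjOn_of_not_nilpOn (fun hh => hy (nilpOn_iff_mem_radical.1 hh))
    obtain ⟨n, hn⟩ := nilpOn_iff_mem_radical.2 hxy
    -- (x*y) acts surjectively, so (x*y)^n does too, contradicting nilpotency
    have hsurj : ∀ m : ℕ, ∀ a ∈ N, ∃ b ∈ N, (x * y) ^ m • b = a := by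
      intro m
      induction m with
      | zero => intro a ha; exact ⟨a, ha, by simp⟩
      | succ m ih =>
        intro a ha
        obtain ⟨b, hb, hba⟩ := ih a ha
        obtain ⟨c, hc, hcb⟩ := hsx b hb
        obtain ⟨d, hd, hdc⟩ := hsy c hc
        refine ⟨d, hd, ?_⟩
        rw [pow_succ, mul_comm ((x*y)^m), mul_smul, mul_smul, smul_comm y ((x*y)^m),
          smul_comm x ((x*y)^m), hdc, hcb, hba]
    obtain ⟨a, ha, hane⟩ := Submodule.exists_mem_ne_zero_of_ne_bot hbot
    obtain ⟨b, hb, hba⟩ := hsurj n a ha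
    rw [hn b hb] at hba
    exact hane hba.symm

end Secondary

section Secondary2

variable {R : Type} [CommRing R] {A : Type} [AddCommGroup A] [Module R A]

theorem NilpOn.mono {x : R} {N₁ N₂ : Submodule R A} (h : N₁ ≤ N₂) (hn : NilpOn x N₂) :
    NilpOn x N₁ := by
  obtain ⟨n, hn⟩ := hn
  exact ⟨n, fun a ha => hn a (h ha)⟩

theorem NilpOn.sup {x : R} {N₁ N₂ : Submodule R A} (h1 : NilpOn x N₁) (h2 : NilpOn x N₂) :
    NilpOn x (N₁ ⊔ N₂) := by
  obtain ⟨n₁, hn₁⟩ := h1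
  obtain ⟨n₂, hn₂⟩ := h2
  refine ⟨n₁ + n₂, fun a ha => ?_⟩
  obtain ⟨b, hb, c, hc, rfl⟩ := Submodule.mem_sup.1 ha
  rw [smul_add]
  have hbz : x ^ (n₁ + n₂) • b = 0 := by
    rw [add_comm, pow_add, mul_smul, hn₁ b hb, smul_zero]
  have hcz : x ^ (n₁ + n₂) • c = 0 := by
    rw [pow_add, mul_smul, hn₂ c hc, smul_zero]
  rw [hbz, hcz, add_zero]

theorem isSecondary_sup {N₁ N₂ : Submodule R A} (h1 : IsSecondary R N₁) (h2 : IsSecondary R N₂)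
    (hp : (Module.annihilator R N₁).radical = (Module.annihilator R N₂).radical) :
    IsSecondary R ↥(N₁ ⊔ N₂) ∧
      (Module.annihilator R ↥(N₁ ⊔ N₂)).radical = (Module.annihilator R N₁).radical := by
  have hbot₁ := (isSecondary_iff.1 h1).1
  have key : ∀ x : R, NilpOn x N₁ → NilpOn x (N₁ ⊔ N₂) := by
    intro x hx
    refine hx.sup ?_
    rw [nilpOn_iff_mem_radical] at hx ⊢
    exact hp ▸ hx
  have hsec : IsSecondary R ↥(N₁ ⊔ N₂) := by
    rw [isSecondary_iff]
    constructor
    · intro hb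
      exact hbot₁ (le_bot_iff.1 (hb ▸ (le_sup_left : N₁ ≤ N₁ ⊔ N₂)))
    · intro x
      by_cases hnil : NilpOn x N₁
      · exact Or.inr (key x hnil)
      · left
        have hs₁ := h1.surjOn_of_not_nilpOn hnil
        have hs₂ : SurjOn x N₂ := by
          refine h2.surjOn_of_not_nilpOn fun hh => hnil ?_
          rw [nilpOn_iff_mem_radical] at hh ⊢
          exact hp ▸ hh
        intro a ha
        obtain ⟨b, hb, c, hc, rfl⟩ := Submodule.mem_sup.1 ha
        obtain ⟨b', hb', rfl⟩ := hs₁ b hb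
        obtain ⟨c', hc', rfl⟩ := hs₂ c hc
        exact ⟨b' + c', Submodule.mem_sup.2 ⟨b', hb', c', hc', rfl⟩, by rw [smul_add]⟩
  refine ⟨hsec, ?_⟩
  ext x
  rw [← nilpOn_iff_mem_radical, ← nilpOn_iff_mem_radical]
  exact ⟨fun h => h.mono le_sup_left, fun h => key x h⟩

theorem finset_sup_secondary {S : Finset (Submodule R A)} (hne : S.Nonempty) {q : Ideal R}
    (hsec : ∀ P ∈ S, IsSecondary R P)
    (hq : ∀ P ∈ S, (Module.annihilator R P).radical = q) :
    IsSecondary R ↥(S.sup id) ∧ (Module.annihilator R ↥(S.sup id)).radical = q := by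
  induction hne using Finset.Nonempty.cons_induction with
  | singleton P =>
    rw [Finset.sup_singleton]
    exact ⟨hsec P (by simp), hq P (by simp)⟩
  | cons P S hPS hSne ih =>
    have hsec' : ∀ Q ∈ S, IsSecondary R Q := fun Q hQ => hsec Q (by simp [hQ])
    have hq' : ∀ Q ∈ S, (Module.annihilator R Q).radical = q := fun Q hQ => hq Q (by simp [hQ])
    obtain ⟨ih1, ih2⟩ := ih hsec' hq'
    rw [Finset.sup_cons]
    simp only [id_eq]
    have hPq : (Module.annihilator R P).radical = q := hq P (by simp)
    have := isSecondary_sup (hsec P (by simp)) ih1 (by rw [hPq, ih2])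
    exact ⟨this.1, by rw [this.2, hPq]⟩

theorem isSecondary_of_sup_irreducible [IsArtinian R A] {N : Submodule R A} (hbot : N ≠ ⊥)
    (hirr : ∀ N₁ N₂ : Submodule R A, N₁ ⊔ N₂ = N → N₁ = N ∨ N₂ = N) : IsSecondary R N := by
  rw [isSecondary_iff]
  refine ⟨hbot, fun x => ?_⟩
  have hmono : ∀ m n : ℕ, m ≤ n →
      N.map (LinearMap.lsmul R A (x ^ n)) ≤ N.map (LinearMap.lsmul R A (x ^ m)) := by
    intro m n hmn
    obtain ⟨k, rfl⟩ := Nat.exists_eq_add_of_le hmn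
    rintro _ ⟨a, ha, rfl⟩
    exact ⟨x ^ k • a, N.smul_mem _ ha, by
      simp only [LinearMap.lsmul_apply, ← mul_smul, ← pow_add]⟩
  set C : ℕ →o (Submodule R A)ᵒᵈ :=
    ⟨fun n => OrderDual.toDual (N.map (LinearMap.lsmul R A (x ^ n))),
      fun m n hmn => hmono m n hmn⟩ with hC
  obtain ⟨n₀, hn₀⟩ := IsArtinian.monotone_stabilizes C
  set n := n₀ + 1 with hn
  have hstab : N.map (LinearMap.lsmul R A (x ^ n)) = N.map (LinearMap.lsmul R A (x ^ (n + n))) := by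
    have h1 : C n₀ = C n := hn₀ n (by omega)
    have h2 : C n₀ = C (n + n) := hn₀ (n + n) (by omega)
    have := h1.symm.trans h2
    exact congrArg OrderDual.ofDual this
  set K : Submodule R A := N ⊓ LinearMap.ker (LinearMap.lsmul R A (x ^ n)) with hK
  set I : Submodule R A := N.map (LinearMap.lsmul R A (x ^ n)) with hI
  have hKI : K ⊔ I = N := by
    apply le_antisymm
    · refine sup_le inf_le_left ?_
      rintro _ ⟨a, ha, rfl⟩
      exact N.smul_mem _ ha
    · intro a ha
      have hx : x ^ n • a ∈ N.map (LinearMap.lsmul R A (x ^ (n + n))) :=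
        hstab ▸ ⟨a, ha, rfl⟩
      obtain ⟨b, hb, hba⟩ := hx
      simp only [LinearMap.lsmul_apply] at hba
      refine Submodule.mem_sup.2 ⟨a - x ^ n • b, ⟨sub_mem ha (N.smul_mem _ hb), ?_⟩,
        x ^ n • b, ⟨b, hb, rfl⟩, by abel⟩
      simp only [SetLike.mem_coe, LinearMap.mem_ker, LinearMap.lsmul_apply, smul_sub]
      rw [← mul_smul, ← pow_add, hba, sub_self]
  rcases hirr K I hKI with hKeq | hIeq
  · right
    refine ⟨n, fun a ha => ?_⟩
    have : a ∈ K := hKeq.symm ▸ ha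
    simpa using this.2
  · left
    intro a ha
    have : a ∈ I := hIeq.symm ▸ ha
    obtain ⟨b, hb, hba⟩ := this
    simp only [LinearMap.lsmul_apply] at hba
    refine ⟨x ^ n₀ • b, N.smul_mem _ hb, ?_⟩
    rw [← hba, ← mul_smul, ← pow_succ']

theorem exists_secondary_rep [IsArtinian R A] (N : Submodule R A) :
    ∃ S : Finset (Submodule R A), (∀ P ∈ S, IsSecondary R P) ∧ S.sup id = N := by
  classical
  induction N using WellFoundedLT.induction with
  | _ N ih =>
    by_cases hbot : N = ⊥
    · exact ⟨∅, by simp, by simp [hbot]⟩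
    by_cases hirr : ∀ N₁ N₂ : Submodule R A, N₁ ⊔ N₂ = N → N₁ = N ∨ N₂ = N
    · refine ⟨{N}, ?_, by simp⟩
      intro P hP
      rw [Finset.mem_singleton] at hP
      subst hP
      exact isSecondary_of_sup_irreducible hbot hirr
    · push_neg at hirr
      obtain ⟨N₁, N₂, hsup, hN₁, hN₂⟩ := hirr
      obtain ⟨S₁, hs₁, he₁⟩ := ih N₁ (lt_of_le_of_ne (hsup ▸ le_sup_left) hN₁)
      obtain ⟨S₂, hs₂, he₂⟩ := ih N₂ (lt_of_le_of_ne (hsup ▸ le_sup_right) hN₂)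
      refine ⟨S₁ ∪ S₂, ?_, by rw [Finset.sup_union, he₁, he₂, hsup]⟩
      intro P hP
      rcases Finset.mem_union.1 hP with h | h
      exacts [hs₁ P h, hs₂ P h]

end Secondary2

section Secondary3

variable {R : Type} [CommRing R] {A : Type} [AddCommGroup A] [Module R A]

theorem exists_min_finset [IsArtinian R A] [DecidableEq (Submodule R A)] :
    ∃ S : Finset (Submodule R A), (∀ P ∈ S, IsSecondary R P) ∧ S.sup id = ⊤ ∧
      Set.InjOn (fun P : Submodule R A => (Module.annihilator R P).radical) (S : Set _) ∧
      ∀ P ∈ S, (S.erase P).sup id ≠ ⊤ := by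
  classical
  set ρ := fun P : Submodule R A => (Module.annihilator R P).radical with hρ
  obtain ⟨S₀, hsec₀, hsup₀⟩ := exists_secondary_rep (⊤ : Submodule R A)
  set G := fun q : Ideal R => (S₀.filter (fun P => ρ P = q)).sup id with hG
  set S₁ := (S₀.image ρ).image G with hS₁
  have hGsec : ∀ q ∈ S₀.image ρ, IsSecondary R ↥(G q) ∧ ρ (G q) = q := by
    intro q hq
    obtain ⟨P, hP, hPq⟩ := Finset.mem_image.1 hq
    have hne : (S₀.filter (fun P => ρ P = q)).Nonempty :=
      ⟨P, Finset.mem_filter.2 ⟨hP, hPq⟩⟩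
    exact finset_sup_secondary hne
      (fun Q hQ => hsec₀ Q (Finset.mem_filter.1 hQ).1)
      (fun Q hQ => (Finset.mem_filter.1 hQ).2)
  have hsec₁ : ∀ P ∈ S₁, IsSecondary R P := by
    intro P hP
    obtain ⟨q, hq, rfl⟩ := Finset.mem_image.1 hP
    exact (hGsec q hq).1
  have hsup₁ : S₁.sup id = ⊤ := by
    apply le_antisymm le_top
    rw [← hsup₀]
    refine Finset.sup_le fun P hP => ?_
    have h1 : (P : Submodule R A) ≤ G (ρ P) :=
      Finset.le_sup (f := id) (Finset.mem_filter.2 ⟨hP, rfl⟩)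
    exact le_trans h1 (Finset.le_sup (f := id)
      (Finset.mem_image.2 ⟨ρ P, Finset.mem_image.2 ⟨P, hP, rfl⟩, rfl⟩))
  have hinj₁ : Set.InjOn ρ (S₁ : Set _) := by
    intro P₁ h₁ P₂ h₂ he
    obtain ⟨q₁, hq₁, rfl⟩ := Finset.mem_image.1 h₁
    obtain ⟨q₂, hq₂, rfl⟩ := Finset.mem_image.1 h₂
    rw [(hGsec q₁ hq₁).2, (hGsec q₂ hq₂).2] at he
    rw [he]
  -- pruning by strong induction on cardinality
  have prune : ∀ (m : ℕ) (S : Finset (Submodule R A)), S.card ≤ m →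
      (∀ P ∈ S, IsSecondary R P) → S.sup id = ⊤ → Set.InjOn ρ (S : Set _) →
      ∃ S' : Finset (Submodule R A), (∀ P ∈ S', IsSecondary R P) ∧ S'.sup id = ⊤ ∧
        Set.InjOn ρ (S' : Set _) ∧ ∀ P ∈ S', (S'.erase P).sup id ≠ ⊤ := by
    intro m
    induction m with
    | zero =>
      intro S hcard hsec hsup hinj
      refine ⟨S, hsec, hsup, hinj, fun P hP => ?_⟩
      have : S = ∅ := Finset.card_eq_zero.1 (Nat.le_zero.1 hcard)
      simp [this] at hP
    | succ m ih =>
      intro S hcard hsec hsup hinj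
      by_cases h : ∃ P ∈ S, (S.erase P).sup id = ⊤
      · obtain ⟨P, hP, hPe⟩ := h
        refine ih (S.erase P) ?_ (fun Q hQ => hsec Q (Finset.erase_subset _ _ hQ)) hPe
          (hinj.mono (by exact_mod_cast Finset.erase_subset P S))
        have := Finset.card_erase_of_mem hP
        omega
      · push_neg at h
        exact ⟨S, hsec, hsup, hinj, h⟩
  exact prune S₁.card S₁ le_rfl hsec₁ hsup₁ hinj₁

theorem exists_minimalSecondaryRep [IsArtinian R A] : Nonempty (MinimalSecondaryRep R A) := by
  classical
  obtain ⟨S, hsec, hsup, hinj, hirr⟩ := exists_min_finset (R := R) (A := A)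
  set e := S.equivFin with he
  set comp : Fin S.card → Submodule R A := fun i => ((e.symm i : S) : Submodule R A) with hcomp
  have hcompmem : ∀ i, comp i ∈ S := fun i => (e.symm i).2
  have hcompinj : Function.Injective comp := by
    intro i j hij
    exact e.symm.injective (Subtype.ext hij)
  have hiSup : (⨆ i, comp i) = S.sup id := by
    rw [Finset.sup_eq_iSup]
    apply le_antisymm
    · exact iSup_le fun i => le_iSup₂ (f := fun (P : Submodule R A) (_ : P ∈ S) => id P)
        (comp i) (hcompmem i)
    · refine iSup₂_le fun P hP => ?_
      have hPe : comp (e ⟨P, hP⟩) = P := by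
        rw [hcomp]
        simp
      exact hPe ▸ le_iSup comp (e ⟨P, hP⟩)
  refine ⟨⟨S.card, comp, fun i => (Module.annihilator R (comp i)).radical,
    by rw [hiSup, hsup], fun i => hsec _ (hcompmem i), fun i => rfl,
    fun i => (hsec _ (hcompmem i)).radical_isPrime, ?_, ?_⟩⟩
  · intro i hi
    refine hirr (comp i) (hcompmem i) ?_
    rw [← top_le_iff, ← hi]
    refine iSup₂_le fun j hj => ?_
    refine Finset.le_sup (f := id) (Finset.mem_erase.2 ⟨?_, hcompmem j⟩)
    exact fun hc => (hj : j ≠ i) (hcompinj hc)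
  · intro i j hij
    have : comp i = comp j := hinj (hcompmem i) (hcompmem j) hij
    exact hcompinj this

end Secondary3

section Dual

variable {R : Type} [CommRing R] [IsNoetherianRing R] [IsLocalRing R]
  {E : Type} [AddCommGroup E] [Module R E]

/-- Maps into an injective module extend along maps with smaller kernel. -/
theorem extend_lemma (hEinj : Module.Injective R E) {M N : Type} [AddCommGroup M] [Module R M]
    [AddCommGroup N] [Module R N] (g : M →ₗ[R] N) (f : M →ₗ[R] E)
    (h : LinearMap.ker g ≤ LinearMap.ker f) : ∃ h' : N →ₗ[R] E, h'.comp g = f := by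
  let e := LinearMap.quotKerEquivRange g
  let f' : M ⧸ LinearMap.ker g →ₗ[R] E := Submodule.liftQ _ f h
  let f'' : LinearMap.range g →ₗ[R] E := f'.comp e.symm.toLinearMap
  obtain ⟨h', hh'⟩ := hEinj.out (LinearMap.range g).subtype
    (Submodule.injective_subtype _) f''
  refine ⟨h', ?_⟩
  ext m
  have h1 : h' (g m) = f'' ⟨g m, LinearMap.mem_range_self g m⟩ :=
    hh' ⟨g m, LinearMap.mem_range_self g m⟩
  have h2 : e.symm ⟨g m, LinearMap.mem_range_self g m⟩ = (LinearMap.ker g).mkQ m :=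
    g.quotKerEquivRange_symm_apply_image m (LinearMap.mem_range_self g m)
  simp only [LinearMap.coe_comp, Function.comp_apply]
  rw [h1]
  show f' (e.symm ⟨g m, _⟩) = f m
  rw [h2, Submodule.mkQ_apply]
  exact Submodule.liftQ_apply _ f m

/-- `E` is a cogenerator: nonzero elements are detected by functionals. -/
theorem exists_functional (hEinj : Module.Injective R E)
    (ι : IsLocalRing.ResidueField R →ₗ[R] E) (hι : Function.Injective ι)
    {M : Type} [AddCommGroup M] [Module R M] {m : M} (hm : m ≠ 0) :
    ∃ f : M →ₗ[R] E, f m ≠ 0 := by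
  set f0 : R →ₗ[R] E := ι.comp (Algebra.linearMap R (IsLocalRing.ResidueField R)) with hf0
  have hker0 : LinearMap.ker f0 = IsLocalRing.maximalIdeal R := by
    ext x
    simp only [hf0, LinearMap.mem_ker, LinearMap.coe_comp, Function.comp_apply,
      Algebra.linearMap_apply, IsLocalRing.ResidueField.algebraMap_eq]
    constructor
    · intro h
      have : IsLocalRing.residue R x = 0 := by
        apply hι
        rw [h, map_zero]
      exact (IsLocalRing.residue_eq_zero_iff x).1 this
    · intro h
      rw [(IsLocalRing.residue_eq_zero_iff x).2 h, map_zero]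
  have hann : LinearMap.ker (LinearMap.toSpanSingleton R M m) ≤ LinearMap.ker f0 := by
    rw [hker0]
    apply IsLocalRing.le_maximalIdeal
    intro h
    apply hm
    have h1 : (1 : R) ∈ LinearMap.ker (LinearMap.toSpanSingleton R M m) := h ▸ trivial
    simpa using h1
  obtain ⟨h', hh'⟩ := extend_lemma hEinj (LinearMap.toSpanSingleton R M m) f0 hann
  refine ⟨h', ?_⟩
  have : h' m = f0 1 := by
    have := congrArg (fun φ => φ 1) hh'
    simpa using this
  rw [this]
  simp only [hf0, LinearMap.coe_comp, Function.comp_apply, Algebra.linearMap_apply,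
    IsLocalRing.ResidueField.algebraMap_eq, map_one]
  intro hcon
  have h1 : (1 : IsLocalRing.ResidueField R) = 0 := by
    apply hι; rw [hcon, map_zero]
  exact one_ne_zero h1

variable {A : Type} [AddCommGroup A] [Module R A]

theorem assoc_of_rep (hEinj : Module.Injective R E)
    (ι : IsLocalRing.ResidueField R →ₗ[R] E) (hι : Function.Injective ι)
    (rep : MinimalSecondaryRep R A) (i : Fin rep.n) :
    IsAssociatedPrime (rep.p i) (A →ₗ[R] E) := by
  classical
  have hnilp : ∀ x : R, x ∈ rep.p i ↔ NilpOn x (rep.comp i) := by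
    intro x
    rw [nilpOn_iff_mem_radical, rep.rad_eq]
  have hsurj : ∀ x : R, x ∉ rep.p i → SurjOn x (rep.comp i) := fun x hx =>
    (rep.secondary i).surjOn_of_not_nilpOn (fun h => hx ((hnilp x).2 h))
  set N' : Submodule R A := ⨆ j ∈ ({i}ᶜ : Set (Fin rep.n)), rep.comp j with hN'def
  have hN' : N' ≠ ⊤ := rep.irredundant i
  set π := N'.mkQ with hπ
  have hsup : rep.comp i ⊔ N' = ⊤ := by
    rw [← top_le_iff, ← rep.sum_eq]
    refine iSup_le fun j => ?_
    by_cases hj : j = i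
    · subst hj; exact le_sup_left
    · exact le_trans (le_iSup₂ (f := fun j _ => rep.comp j) j hj) le_sup_right
  have hsurjQ : ∀ q : A ⧸ N', ∃ b ∈ rep.comp i, π b = q := by
    intro q
    obtain ⟨a, rfl⟩ := N'.mkQ_surjective q
    have ha : a ∈ rep.comp i ⊔ N' := hsup ▸ Submodule.mem_top
    obtain ⟨b, hb, c, hc, rfl⟩ := Submodule.mem_sup.1 ha
    refine ⟨b, hb, ?_⟩
    simp only [hπ, Submodule.mkQ_apply, map_add]
    rw [(Submodule.Quotient.mk_eq_zero N').2 hc]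
    rw [add_zero]
  have hQnt : Nontrivial (A ⧸ N') := Submodule.Quotient.nontrivial_iff.2 hN'
  obtain ⟨q0, hq0⟩ := exists_ne (0 : A ⧸ N')
  obtain ⟨f0, hf0⟩ := exists_functional hEinj ι hι hq0
  have hDQnt : Nontrivial ((A ⧸ N') →ₗ[R] E) :=
    nontrivial_of_ne f0 0 (fun h => hf0 (by rw [h]; rfl))
  obtain ⟨P, hP⟩ := associatedPrimes.nonempty R ((A ⧸ N') →ₗ[R] E)
  have hPcopy := hP
  obtain ⟨hPprime, f, hf⟩ := isAssociatedPrime_iff.1 hPcopy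
  have hPf : ∀ x : R, x ∈ P ↔ x • f = 0 := fun x => by
    rw [hf, Submodule.mem_colon_singleton, Submodule.mem_bot]
  have hfne : f ≠ 0 := by
    rintro rfl
    rw [Submodule.colon_singleton_zero] at hf
    exact hPprime.ne_top hf
  have hPeq : P = rep.p i := by
    ext x
    constructor
    · intro hx
      by_contra hxp
      apply hfne
      refine LinearMap.ext fun q => ?_
      obtain ⟨b, hb, rfl⟩ := hsurjQ q
      obtain ⟨b', hb', rfl⟩ := hsurj x hxp b hb
      have h0 : x • f (π b') = 0 := by
        have := congrArg (fun φ : (A ⧸ N') →ₗ[R] E => φ (π b')) ((hPf x).1 hx)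
        simpa using this
      rw [map_smul π, map_smul f]
      exact h0
    · intro hx
      obtain ⟨n, hn⟩ := (hnilp x).1 hx
      have hxn : x ^ n • f = 0 := by
        refine LinearMap.ext fun q => ?_
        obtain ⟨b, hb, rfl⟩ := hsurjQ q
        rw [LinearMap.smul_apply, LinearMap.zero_apply, ← map_smul f, ← map_smul π, hn b hb,
          map_zero, map_zero]
      exact hPprime.mem_of_pow_mem n ((hPf (x ^ n)).2 hxn)
  have hΨ : Function.Injective (LinearMap.lcomp R E π) := by
    intro g₁ g₂ hg
    refine LinearMap.ext fun q => ?_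
    obtain ⟨a, rfl⟩ := N'.mkQ_surjective q
    exact congrArg (fun φ => φ a) hg
  have := (hPeq ▸ (hP : IsAssociatedPrime P ((A ⧸ N') →ₗ[R] E)))
  exact this.map_of_injective (LinearMap.lcomp R E π) hΨ

theorem rep_of_assoc (rep : MinimalSecondaryRep R A) {q : Ideal R}
    (hq : IsAssociatedPrime q (A →ₗ[R] E)) : ∃ i, rep.p i = q := by
  classical
  have hnilp : ∀ (i : Fin rep.n) (x : R), x ∈ rep.p i ↔ NilpOn x (rep.comp i) := by
    intro i x
    rw [nilpOn_iff_mem_radical, rep.rad_eq]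
  have hsurj : ∀ (i : Fin rep.n) (x : R), x ∉ rep.p i → SurjOn x (rep.comp i) := fun i x hx =>
    (rep.secondary i).surjOn_of_not_nilpOn (fun h => hx ((hnilp i x).2 h))
  obtain ⟨hqprime, f, hf⟩ := isAssociatedPrime_iff.1 hq
  have hqf : ∀ x : R, x ∈ q ↔ x • f = 0 := fun x => by
    rw [hf, Submodule.mem_colon_singleton, Submodule.mem_bot]
  set g : ∀ i : Fin rep.n, ↥(rep.comp i) →ₗ[R] E :=
    fun i => f.comp (rep.comp i).subtype with hg
  have hq_eq : Finset.univ.inf (fun i => (Submodule.span R {g i}).annihilator) ≤ q := by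
    intro x hx
    rw [Submodule.mem_finsetInf] at hx
    rw [hqf]
    ext a
    have hker : ∀ i : Fin rep.n, rep.comp i ≤ LinearMap.ker (x • f) := by
      intro i b hb
      have hxi : x • g i = 0 := Submodule.mem_annihilator_span_singleton _ x |>.1
        (hx i (Finset.mem_univ i))
      have : (x • g i) ⟨b, hb⟩ = 0 := by rw [hxi]; rfl
      simpa [hg] using this
    have : a ∈ LinearMap.ker (x • f) := by
      have htop : (⊤ : Submodule R A) ≤ LinearMap.ker (x • f) := by
        rw [← rep.sum_eq]
        exact iSup_le hker
      exact htop Submodule.mem_top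
    simpa using this
  obtain ⟨j, _, hj⟩ := (Ideal.IsPrime.inf_le' hqprime).1 hq_eq
  have hgj : g j ≠ 0 := by
    rintro hgj0
    rw [hgj0, Submodule.span_zero_singleton, Submodule.annihilator_bot] at hj
    exact hqprime.ne_top (top_le_iff.1 hj)
  refine ⟨j, ?_⟩
  ext x
  constructor
  · intro hx
    obtain ⟨n, hn⟩ := (hnilp j x).1 hx
    have hxn : x ^ n • g j = 0 := by
      ext m
      rw [LinearMap.smul_apply, LinearMap.zero_apply]
      have hz : (x ^ n) • (m : A) = 0 := hn m m.2
      have hgm : g j m = f (m : A) := rfl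
      rw [hgm, ← map_smul f, hz, map_zero]
    exact hqprime.mem_of_pow_mem n (hj (Submodule.mem_annihilator_span_singleton _ _ |>.2 hxn))
  · intro hx
    by_contra hxp
    apply hgj
    ext m
    obtain ⟨b, hb, hbm⟩ := hsurj j x hxp m m.2
    have hxf : x • f = 0 := (hqf x).1 hx
    have : (x • f) b = 0 := by rw [hxf]; rfl
    rw [LinearMap.smul_apply, ← map_smul f, hbm] at this
    simpa [hg] using this

theorem attached_eq_associated (hEinj : Module.Injective R E)
    (ι : IsLocalRing.ResidueField R →ₗ[R] E) (hι : Function.Injective ι)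
    [IsArtinian R A] :
    attachedPrimes R A = associatedPrimes R (A →ₗ[R] E) := by
  ext q
  constructor
  · rintro ⟨rep, i, rfl⟩
    exact assoc_of_rep hEinj ι hι rep i
  · intro hq
    obtain ⟨rep⟩ := exists_minimalSecondaryRep (R := R) (A := A)
    obtain ⟨i, hi⟩ := rep_of_assoc rep hq
    exact ⟨rep, i, hi⟩

end Dual

section Finiteness

variable {R : Type} [CommRing R] [IsNoetherianRing R] [IsLocalRing R]
  {E : Type} [AddCommGroup E] [Module R E]
  {A : Type} [AddCommGroup A] [Module R A]

theorem mem_smul_top_iff' (I : Ideal R) (x : R) : x ∈ I • (⊤ : Submodule R R) ↔ x ∈ I := by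
  rw [Ideal.smul_eq_mul, Ideal.mul_top]

theorem exists_pow_annihilates [IsArtinian R A] (a : A) :
    ∃ t : ℕ, ∀ x ∈ (IsLocalRing.maximalIdeal R) ^ t, x • a = 0 := by
  set m := IsLocalRing.maximalIdeal R with hm
  set N : ℕ →o (Submodule R A)ᵒᵈ :=
    ⟨fun t => OrderDual.toDual ((m ^ t) • Submodule.span R {a}), by
      intro t u htu
      exact Submodule.smul_mono_left (Ideal.pow_le_pow_right htu)⟩ with hN
  obtain ⟨t₀, ht₀⟩ := IsArtinian.monotone_stabilizes N
  have heq : (m ^ t₀) • Submodule.span R {a} ≤ m • ((m ^ t₀) • Submodule.span R {a}) := by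
    have h1 : N t₀ = N (t₀ + 1) := ht₀ (t₀ + 1) (Nat.le_succ t₀)
    have h2 : (m ^ t₀) • Submodule.span R {a} = (m ^ (t₀ + 1)) • Submodule.span R {a} :=
      congrArg OrderDual.ofDual h1
    have h3 : (m ^ (t₀ + 1)) • Submodule.span R {a} =
        m • ((m ^ t₀) • Submodule.span R {a}) := by
      rw [pow_succ, mul_comm, ← Ideal.smul_eq_mul, Submodule.smul_assoc]
    exact le_of_eq (h2.trans h3)
  have hfg : ((m ^ t₀) • Submodule.span R {a}).FG := by
    haveI : Module.Finite R ↥(Submodule.span R {a}) :=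
      Module.Finite.iff_fg.2 (Submodule.fg_span_singleton a)
    haveI : IsNoetherian R ↥(Submodule.span R {a}) :=
      isNoetherian_of_isNoetherianRing_of_finite R _
    have h1 : (((m ^ t₀) • Submodule.span R {a}).comap
        (Submodule.span R {a}).subtype).FG := IsNoetherian.noetherian _
    have h2 := h1.map (Submodule.span R {a}).subtype
    rwa [Submodule.map_comap_subtype, inf_eq_right.2 Submodule.smul_le_right] at h2
  have hbot : (m ^ t₀) • Submodule.span R {a} = ⊥ :=
    Submodule.eq_bot_of_le_smul_of_le_jacobson_bot m _ hfg heq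
      (IsLocalRing.maximalIdeal_le_jacobson ⊥)
  refine ⟨t₀, fun x hx => ?_⟩
  have : x • a ∈ (m ^ t₀) • Submodule.span R {a} :=
    Submodule.smul_mem_smul hx (Submodule.mem_span_singleton_self a)
  rwa [hbot, Submodule.mem_bot] at this

/-- Koszul-type lemma: functionals vanishing on the `I`-torsion lie in `I • D(A)`. -/
theorem koszul (hEinj : Module.Injective R E) (I : Ideal R) (f : A →ₗ[R] E)
    (hf : ∀ a : A, (∀ x ∈ I, x • a = 0) → f a = 0) :
    f ∈ I • (⊤ : Submodule R (A →ₗ[R] E)) := by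
  classical
  obtain ⟨s, hs⟩ := (IsNoetherian.noetherian I : I.FG)
  set g : A →ₗ[R] (↥s → A) := LinearMap.pi (fun y : ↥s => LinearMap.lsmul R A (y : R)) with hg
  have hker : LinearMap.ker g ≤ LinearMap.ker f := by
    intro a ha
    rw [LinearMap.mem_ker] at ha ⊢
    apply hf
    intro x hx
    rw [← hs] at hx
    induction hx using Submodule.span_induction with
    | mem y hy =>
      have := congrFun ha ⟨y, hy⟩
      exact this
    | zero => rw [zero_smul]
    | add u v _ _ hu hv => rw [add_smul, hu, hv, add_zero]
    | smul r u _ hu => rw [smul_eq_mul, mul_smul, hu, smul_zero]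
  obtain ⟨h, hh⟩ := extend_lemma hEinj g f hker
  have hfeq : f = ∑ y : ↥s, (y : R) • (h.comp (LinearMap.single R (fun _ : ↥s => A) y)) := by
    ext a
    rw [← hh]
    have hga : g a = ∑ y : ↥s, Pi.single y ((y : R) • a) := by
      rw [hg]
      exact (Finset.univ_sum_single _).symm
    simp only [LinearMap.coe_comp, Function.comp_apply, hga, map_sum, LinearMap.sum_apply,
      LinearMap.smul_apply, LinearMap.coe_single]
    refine Finset.sum_congr rfl fun y _ => ?_
    rw [Pi.single_smul, map_smul]
  rw [hfeq]
  refine Submodule.sum_mem _ fun y _ => ?_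
  exact Submodule.smul_mem_smul (hs ▸ Submodule.subset_span y.2) trivial

theorem koszul_rev {I : Ideal R} {f : A →ₗ[R] E}
    (hf : f ∈ I • (⊤ : Submodule R (A →ₗ[R] E))) {a : A} (ha : ∀ x ∈ I, x • a = 0) :
    f a = 0 := by
  refine Submodule.smul_induction_on hf (fun x hx g _ => ?_) (fun u v hu hv => ?_)
  · rw [LinearMap.smul_apply, ← map_smul, ha x hx, map_zero]
  · rw [LinearMap.add_apply, hu, hv, add_zero]

omit [IsNoetherianRing R] in
theorem torsion_in_range (ι : IsLocalRing.ResidueField R →ₗ[R] E)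
    (hess : ∀ N : Submodule R E, N ⊓ LinearMap.range ι = ⊥ → N = ⊥)
    {e : E} (he : ∀ x ∈ IsLocalRing.maximalIdeal R, x • e = 0) :
    e ∈ LinearMap.range ι := by
  by_contra hne
  have hinf : Submodule.span R {e} ⊓ LinearMap.range ι = ⊥ := by
    rw [eq_bot_iff]
    rintro v ⟨hv1, hv2⟩
    obtain ⟨r, rfl⟩ := Submodule.mem_span_singleton.1 hv1
    by_cases hr : r ∈ IsLocalRing.maximalIdeal R
    · rw [Submodule.mem_bot, he r hr]
    · exfalso
      have hu : IsUnit r := by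
        by_contra hnu
        exact hr (IsLocalRing.mem_maximalIdeal r |>.2 hnu)
      apply hne
      have hmem : (↑hu.unit⁻¹ : R) • (r • e) ∈ LinearMap.range ι :=
        Submodule.smul_mem _ _ hv2
      have hr1 : (↑hu.unit⁻¹ : R) * r = 1 := hu.val_inv_mul
      rwa [smul_smul, hr1, one_smul] at hmem
  have := hess _ hinf
  apply hne
  have he0 : e ∈ Submodule.span R {e} := Submodule.mem_span_singleton_self e
  rw [this, Submodule.mem_bot] at he0
  rw [he0]
  exact Submodule.zero_mem _

end Finiteness

section Finiteness2

variable {R : Type} [CommRing R] [IsNoetherianRing R] [IsLocalRing R]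
  {E : Type} [AddCommGroup E] [Module R E]
  {A : Type} [AddCommGroup A] [Module R A]

theorem soc_finite [IsArtinian R A] :
    Module.Finite R
      ↥(Submodule.torsionBySet R A ((IsLocalRing.maximalIdeal R : Ideal R) : Set R)) := by
  set m := IsLocalRing.maximalIdeal R
  set soc := Submodule.torsionBySet R A ((m : Ideal R) : Set R) with hsoc
  letI : Field (R ⧸ m) := Ideal.Quotient.field m
  haveI : IsArtinian R ↥soc := inferInstance
  haveI hart : IsArtinian (R ⧸ m) ↥soc := isArtinian_of_tower R inferInstance
  set b := Module.Basis.ofVectorSpace (R ⧸ m) ↥soc with hb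
  have hli : LinearIndependent (R ⧸ m)
      ((↑) : Module.Basis.ofVectorSpaceIndex (R ⧸ m) ↥soc → ↥soc) := by
    have := b.linearIndependent
    rwa [Module.Basis.coe_ofVectorSpace] at this
  have hfin := IsArtinian.finite_of_linearIndependent (R := R ⧸ m) hli
  haveI := hfin.to_subtype
  haveI : Module.Finite (R ⧸ m) ↥soc := Module.Finite.of_basis b
  haveI : Module.Finite R (R ⧸ m) :=
    Module.Finite.of_surjective m.mkQ (Submodule.mkQ_surjective m)
  exact Module.Finite.trans (R ⧸ m) ↥soc

theorem dec (hEinj : Module.Injective R E)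
    (ι : IsLocalRing.ResidueField R →ₗ[R] E) (hι : Function.Injective ι)
    (hess : ∀ N : Submodule R E, N ⊓ LinearMap.range ι = ⊥ → N = ⊥)
    [IsArtinian R A] :
    ∃ (k : ℕ) (G : Fin k → (A →ₗ[R] E)), ∀ h : A →ₗ[R] E, ∃ c : Fin k → R,
      h - ∑ i, c i • G i ∈ (IsLocalRing.maximalIdeal R) • (⊤ : Submodule R (A →ₗ[R] E)) := by
  classical
  set m := IsLocalRing.maximalIdeal R with hm
  set soc := Submodule.torsionBySet R A ((m : Ideal R) : Set R) with hsoc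
  haveI hfin : Module.Finite R ↥soc := soc_finite
  have hval : ∀ (f : ↥soc →ₗ[R] E) (y : ↥soc), f y ∈ LinearMap.range ι := by
    intro f y
    apply torsion_in_range ι hess
    intro x hx
    rw [← map_smul]
    have hxy : x • y = 0 := by
      apply Subtype.ext
      exact (Submodule.mem_torsionBySet_iff _ _).1 y.2 ⟨x, hx⟩
    rw [hxy, map_zero]
  obtain ⟨t, ht⟩ : (⊤ : Submodule R ↥soc).FG := hfin.fg_top
  set Φ : (↥soc →ₗ[R] E) →ₗ[R] (↥t → ↥(LinearMap.range ι)) :=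
    LinearMap.pi (fun y : ↥t =>
      LinearMap.codRestrict _ (LinearMap.applyₗ (y : ↥soc)) (fun f => hval f y)) with hΦ
  have hΦinj : Function.Injective Φ := by
    rw [← LinearMap.ker_eq_bot, eq_bot_iff]
    intro f hf
    rw [LinearMap.mem_ker] at hf
    rw [Submodule.mem_bot]
    have hz : ∀ z ∈ Submodule.span R (↑t : Set ↥soc), f z = 0 := by
      intro z hz
      induction hz using Submodule.span_induction with
      | mem y hy =>
        have h1 := congrFun hf ⟨y, hy⟩
        have h2 := congrArg Subtype.val h1
        exact h2
      | zero => rw [map_zero]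
      | add u v _ _ hu hv => rw [map_add, hu, hv, add_zero]
      | smul r u _ hu => rw [map_smul, hu, smul_zero]
    ext z
    exact hz z (ht ▸ trivial)
  haveI : Module.Finite R (IsLocalRing.ResidueField R) := by
    apply Module.Finite.of_surjective (Algebra.linearMap R (IsLocalRing.ResidueField R))
    intro z
    obtain ⟨x, hx⟩ := Ideal.Quotient.mk_surjective z
    refine ⟨x, ?_⟩
    rw [Algebra.linearMap_apply, IsLocalRing.ResidueField.algebraMap_eq]
    exact hx
  haveI : IsNoetherian R (IsLocalRing.ResidueField R) :=
    isNoetherian_of_isNoetherianRing_of_finite R _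
  haveI : IsNoetherian R ↥(LinearMap.range ι) :=
    isNoetherian_of_injective (LinearEquiv.ofInjective ι hι).symm.toLinearMap
      (LinearEquiv.ofInjective ι hι).symm.injective
  haveI : IsNoetherian R (↥soc →ₗ[R] E) := isNoetherian_of_injective Φ hΦinj
  obtain ⟨u, hu⟩ : (⊤ : Submodule R (↥soc →ₗ[R] E)).FG := IsNoetherian.noetherian ⊤
  set k := u.card with hk
  set gg : Fin k → (↥soc →ₗ[R] E) := fun i => ↑(u.equivFin.symm i) with hgg
  have hrange : Set.range gg = (u : Set _) := by
    ext v
    constructor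
    · rintro ⟨i, rfl⟩
      exact (u.equivFin.symm i).2
    · intro hv
      exact ⟨u.equivFin ⟨v, hv⟩, by simp [hgg]⟩
  have hext : ∀ i, ∃ G : A →ₗ[R] E, G.comp soc.subtype = gg i := fun i =>
    extend_lemma hEinj soc.subtype (gg i) (by rw [Submodule.ker_subtype]; exact bot_le)
  choose G hG using hext
  refine ⟨k, G, fun h => ?_⟩
  have hmem : h.comp soc.subtype ∈ Submodule.span R (Set.range gg) := by
    rw [hrange, hu]
    trivial
  rw [Submodule.mem_span_range_iff_exists_fun] at hmem
  obtain ⟨c, hc⟩ := hmem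
  refine ⟨c, koszul hEinj _ _ ?_⟩
  intro a ha
  have haso : a ∈ soc := (Submodule.mem_torsionBySet_iff _ _).2 (fun x => ha x x.2)
  have h1 : ∀ i, G i a = gg i ⟨a, haso⟩ := by
    intro i
    have := congrFun (congrArg (fun (φ : ↥soc →ₗ[R] E) => ⇑φ) (hG i)) ⟨a, haso⟩
    simpa using this
  have h2 : h a = (∑ i, c i • gg i) ⟨a, haso⟩ := by
    rw [hc]
    rfl
  rw [LinearMap.sub_apply, LinearMap.sum_apply, h2]
  rw [LinearMap.sum_apply]
  rw [sub_eq_zero]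
  refine Finset.sum_congr rfl fun i _ => ?_
  rw [LinearMap.smul_apply, LinearMap.smul_apply, h1 i]

end Finiteness2

section Finiteness3

variable {R : Type} [CommRing R] [IsNoetherianRing R] [IsLocalRing R]
  {E : Type} [AddCommGroup E] [Module R E]
  {A : Type} [AddCommGroup A] [Module R A]

theorem dual_finite (hEinj : Module.Injective R E)
    (ι : IsLocalRing.ResidueField R →ₗ[R] E) (hι : Function.Injective ι)
    (hess : ∀ N : Submodule R E, N ⊓ LinearMap.range ι = ⊥ → N = ⊥)
    [IsArtinian R A] [IsAdicComplete (IsLocalRing.maximalIdeal R) R] :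
    Module.Finite R (A →ₗ[R] E) := by
  classical
  set m := IsLocalRing.maximalIdeal R with hm
  obtain ⟨k, G, hdec⟩ := dec hEinj ι hι hess (A := A)
  suffices hsp : ∀ f : A →ₗ[R] E, f ∈ Submodule.span R (Set.range G) by
    refine ⟨?_⟩
    have htop : (⊤ : Submodule R (A →ₗ[R] E)) = Submodule.span R (Set.range G) :=
      le_antisymm (fun f _ => hsp f) le_top
    rw [htop]
    exact Submodule.fg_span (Set.finite_range G)
  intro f
  have hstep : ∀ (n : ℕ) (g : A →ₗ[R] E), g ∈ (m ^ n) • (⊤ : Submodule R (A →ₗ[R] E)) →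
      ∃ c : Fin k → R, (∀ i, c i ∈ m ^ n) ∧
        g - ∑ i, c i • G i ∈ (m ^ (n + 1)) • (⊤ : Submodule R (A →ₗ[R] E)) := by
    intro n g hg
    refine Submodule.smul_induction_on hg ?_ ?_
    · intro x hx h _
      obtain ⟨c₀, hc₀⟩ := hdec h
      refine ⟨fun i => x * c₀ i, fun i => Ideal.mul_mem_right _ _ hx, ?_⟩
      have key : x • h - ∑ i, (x * c₀ i) • G i = x • (h - ∑ i, c₀ i • G i) := by
        rw [smul_sub, Finset.smul_sum]
        simp_rw [mul_smul]
      rw [key]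
      have h1 : x • (h - ∑ i, c₀ i • G i) ∈ (m ^ n) • (m • (⊤ : Submodule R (A →ₗ[R] E))) :=
        Submodule.smul_mem_smul hx hc₀
      rwa [← Submodule.smul_assoc, Ideal.smul_eq_mul, ← pow_succ] at h1
    · intro g₁ g₂ h₁ h₂
      obtain ⟨c₁, hc₁, hg₁⟩ := h₁
      obtain ⟨c₂, hc₂, hg₂⟩ := h₂
      refine ⟨c₁ + c₂, fun i => Ideal.add_mem _ (hc₁ i) (hc₂ i), ?_⟩
      have hsum : g₁ + g₂ - ∑ i, (c₁ + c₂) i • G i =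
          (g₁ - ∑ i, c₁ i • G i) + (g₂ - ∑ i, c₂ i • G i) := by
        simp only [Pi.add_apply, add_smul, Finset.sum_add_distrib]
        abel
      rw [hsum]
      exact Submodule.add_mem _ hg₁ hg₂
  set F : ∀ n : ℕ, {g : A →ₗ[R] E // g ∈ (m ^ n) • (⊤ : Submodule R (A →ₗ[R] E))} :=
    fun n => Nat.rec
      ⟨f, by rw [pow_zero, Ideal.one_eq_top, Submodule.top_smul]; trivial⟩
      (fun n p => ⟨p.1 - ∑ i, (hstep n p.1 p.2).choose i • G i,
        (hstep n p.1 p.2).choose_spec.2⟩) n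
    with hF
  set c : ℕ → Fin k → R := fun n => (hstep n (F n).1 (F n).2).choose with hc
  have hcmem : ∀ n i, c n i ∈ m ^ n := fun n i => (hstep n (F n).1 (F n).2).choose_spec.1 i
  have hFsucc : ∀ n, (F (n + 1)).1 = (F n).1 - ∑ i, c n i • G i := fun n => rfl
  set β : Fin k → ℕ → R := fun i N => ∑ n ∈ Finset.range N, c n i with hβ
  have htel : ∀ N : ℕ, f - ∑ i, (β i N) • G i = (F N).1 := by
    intro N
    induction N with
    | zero =>
      simp only [hβ, Finset.range_zero, Finset.sum_empty, zero_smul, Finset.sum_const_zero,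
        sub_zero]
      rfl
    | succ N ih =>
      rw [hFsucc N, ← ih]
      have hstepβ : ∀ i, β i (N + 1) = β i N + c N i := fun i => Finset.sum_range_succ _ N
      simp only [hstepβ, add_smul, Finset.sum_add_distrib]
      abel
  have hcauchy : ∀ i : Fin k, ∀ {p q : ℕ}, p ≤ q →
      β i p ≡ β i q [SMOD (m ^ p • (⊤ : Submodule R R))] := by
    intro i p q hpq
    rw [SModEq.sub_mem, mem_smul_top_iff']
    have hdiff : β i p - β i q = -∑ n ∈ Finset.Ico p q, c n i := by
      rw [hβ]
      simp only []
      rw [← Finset.sum_range_add_sum_Ico (fun n => c n i) hpq]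
      abel
    rw [hdiff]
    exact neg_mem (Submodule.sum_mem _ fun n hn =>
      Ideal.pow_le_pow_right (Finset.mem_Ico.1 hn).1 (hcmem n i))
  have hlim : ∀ i : Fin k, ∃ L : R, ∀ n, β i n ≡ L [SMOD (m ^ n • (⊤ : Submodule R R))] := by
    intro i
    exact IsPrecomplete.prec (IsAdicComplete.toIsPrecomplete (I := m))
      (fun {p q} h => hcauchy i h)
  choose L hL using hlim
  have hfinal : ∀ N, f - ∑ i, L i • G i ∈ (m ^ N) • (⊤ : Submodule R (A →ₗ[R] E)) := by
    intro N
    have e1 : f - ∑ i, L i • G i = (F N).1 + ∑ i, (β i N - L i) • G i := by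
      rw [← htel N]
      simp only [sub_smul, Finset.sum_sub_distrib]
      abel
    rw [e1]
    refine Submodule.add_mem _ (F N).2 (Submodule.sum_mem _ fun i _ => ?_)
    have hmemN : β i N - L i ∈ m ^ N := by
      have := hL i N
      rwa [SModEq.sub_mem, mem_smul_top_iff'] at this
    exact Submodule.smul_mem_smul hmemN trivial
  have hzero : f - ∑ i, L i • G i = 0 := by
    ext a
    obtain ⟨t, htt⟩ := exists_pow_annihilates (R := R) a
    rw [LinearMap.zero_apply]
    exact koszul_rev (hfinal t) htt
  have hfeq : f = ∑ i, L i • G i := by rwa [sub_eq_zero] at hzero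
  rw [hfeq]
  exact Submodule.sum_mem _ fun i _ =>
    Submodule.smul_mem _ _ (Submodule.subset_span ⟨i, rfl⟩)

end Finiteness3

/-- Matlis duality over a complete Noetherian local ring `(R, 𝔪, k)`: for an Artinian
`R`-module `A`, the Matlis dual `D(A) = Hom_R(A, E)` (where `E = E_R(k)` is an injective
hull of the residue field) is a finitely generated `R`-module, and
`Att_R A = Ass_R D(A)`. -/

theorem matlisDual_finite_and_attachedPrimes_eq_associatedPrimes
    (R : Type) [CommRing R] [IsNoetherianRing R] [IsLocalRing R]
    [IsAdicComplete (IsLocalRing.maximalIdeal R) R]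
    (A : Type) [AddCommGroup A] [Module R A] [IsArtinian R A]
    (E : Type) [AddCommGroup E] [Module R E]
    (hEinj : Module.Injective R E)
    (ι : IsLocalRing.ResidueField R →ₗ[R] E) (hι : Function.Injective ι)
    (hess : ∀ N : Submodule R E, N ⊓ LinearMap.range ι = ⊥ → N = ⊥) :
    Module.Finite R (A →ₗ[R] E) ∧
      attachedPrimes R A = associatedPrimes R (A →ₗ[R] E) := by
  exact ⟨dual_finite hEinj ι hι hess, attached_eq_associated hEinj ι hι⟩
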